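/- arXiv:1201.5529 — 8 statements merged into one kernel-verified Lean document; each statement's English description precedes it below -/
import Mathlib

section
/- Let Σ be a type, X an index set, and f : (X → Σ) → (X → Σ) a map. If f is localized upon Y ⊆ X and also localized upon Z ⊆ X, then f is localized upon the intersection Y ∩ Z. -/
/-- A map `f` on configurations `X → A` is *localized upon* `Y ⊆ X` if
(i) it acts as the identity outside `Y`, and
(ii) the values of `f c` on `Y` only depend on the values of `c` on `Y`. -/
def Localized {X A : Type*} (f : (X → A) → (X → A)) (Y : Set X) : Prop :=
  (∀ (c : X → A) (x : X), x ∉ Y → f c x = c x) ∧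
  (∀ c d : X → A, (∀ x ∈ Y, c x = d x) → ∀ x ∈ Y, f c x = f d x)

theorem localized_inter {X A : Type*} (f : (X → A) → (X → A)) (Y Z : Set X)
    (hY : Localized f Y) (hZ : Localized f Z) : Localized f (Y ∩ Z) := by
  classical
  constructor
  · intro c x hx
    rcases (not_and_or.mp (by simpa [Set.mem_inter_iff] using hx)) with h | h
    · exact hY.1 c x h
    · exact hZ.1 c x h
  · intro c d hcd x hx
    set e : X → A := fun y => if y ∈ Z then c y else d y with he
    have hec : ∀ y ∈ Z, c y = e y := fun y hy => by simp [he, hy]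
    have hed : ∀ y ∈ Y, e y = d y := by
      intro y hy
      by_cases hz : y ∈ Z
      · simpa [he, hz] using hcd y ⟨hy, hz⟩
      · simp [he, hz]
    have h1 : f c x = f e x := hZ.2 c e hec x hx.2
    have h2 : f e x = f d x := hY.2 e d hed x hx.1
    rw [h1, h2]
end

section
/- Let Σ be a type and G a bijection of the space of configurations ℤ → Σ. Then the reversible updates commute pairwise: for all i, j : ℤ, K_i ∘ K_j = K_j ∘ K_i. -/
/-- The map `G × id` on two-layer configurations: apply `G` to the main (false)
layer and leave the auxiliary (true) layer unchanged. -/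
def GId {A : Type*} (G : (ℤ → A) → (ℤ → A)) (c : ℤ × Bool → A) : ℤ × Bool → A :=
  fun p => if p.2 = true then c p else G (fun j => c (j, false)) p.1

/-- `SwapAt i` exchanges the values `c (i, false)` and `c (i, true)`,
leaving all other values unchanged. -/
def SwapAt {A : Type*} (i : ℤ) (c : ℤ × Bool → A) : ℤ × Bool → A :=
  fun p => if p.1 = i then c (p.1, !p.2) else c p

/-- The reversible update at cell `i`: `K_i = (G⁻¹ × id) ∘ Swap_i ∘ (G × id)`. -/
def K {A : Type*} (G : (ℤ → A) ≃ (ℤ → A)) (i : ℤ) :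
    (ℤ × Bool → A) → (ℤ × Bool → A) :=
  GId G.symm ∘ SwapAt i ∘ GId G

lemma GId_GId_symm {A : Type*} (G : (ℤ → A) ≃ (ℤ → A)) (c : ℤ × Bool → A) :
    GId G (GId G.symm c) = c := by
  funext p
  obtain ⟨n, b⟩ := p
  cases b <;> simp [GId]

lemma SwapAt_comm {A : Type*} (i j : ℤ) (c : ℤ × Bool → A) :
    SwapAt i (SwapAt j c) = SwapAt j (SwapAt i c) := by
  funext p
  obtain ⟨n, b⟩ := p
  by_cases hi : n = i <;> by_cases hj : n = j <;>
    simp [SwapAt, hi, hj]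

theorem K_commute {A : Type*} (G : (ℤ → A) ≃ (ℤ → A)) (i j : ℤ) :
    K G i ∘ K G j = K G j ∘ K G i := by
  funext c
  simp only [K, Function.comp_apply, GId_GId_symm, SwapAt_comm]
end

section
/- Let Σ be a type, G a bijection of the space of configurations ℤ → Σ, and S a finite set of integers such that G is semilocalizable with respect to S. Then the reversible update K₀ is localized upon the set (S × {false}) ∪ {(0, true)} of the index set ℤ × Bool. -/
/-- `G` is semilocalizable with respect to the finite set `S`: there are
bijections `g : (S → A) ≃ A × E` and `h̃ : E × ((ℤ \ S) → A) ≃ ((ℤ \ {0}) → A)`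
computing `G c 0` from `c` on `S` via the first component of `g`, and the rest
of `G c` from the remainder `E` together with `c` outside `S`. -/
def Semilocalizable {A : Type u} (G : (ℤ → A) ≃ (ℤ → A)) (S : Finset ℤ) : Prop :=
  ∃ (E : Type u) (g : ({ i : ℤ // i ∈ S } → A) ≃ A × E)
    (h : E × ({ i : ℤ // i ∉ S } → A) ≃ ({ i : ℤ // i ≠ 0 } → A)),
    ∀ c : ℤ → A,
      G c 0 = (g (fun s => c s.1)).1 ∧
      ∀ (j : ℤ) (hj : j ≠ 0),
        G c j = h ((g (fun s => c s.1)).2, fun s => c s.1) ⟨j, hj⟩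

theorem K_zero_localized_of_semilocalizable {A : Type u}
    (G : (ℤ → A) ≃ (ℤ → A)) (S : Finset ℤ) (hG : Semilocalizable G S) :
    Localized (K G 0)
      (((↑S : Set ℤ) ×ˢ ({false} : Set Bool)) ∪ {((0 : ℤ), true)}) := by
  obtain ⟨E, g, h, hgh⟩ := hG
  have key : ∀ c : ℤ × Bool → A, ∀ p : ℤ × Bool,
      K G 0 c p =
        if p.2 then (if p.1 = 0 then (g (fun s : {i : ℤ // i ∈ S} => c (s.1, false))).1 else c p)
        else (if hS : p.1 ∈ S then
            g.symm (c (0, true), (g (fun s : {i : ℤ // i ∈ S} => c (s.1, false))).2)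
              ⟨p.1, hS⟩
          else c (p.1, false)) := by
    intro c p
    set c₀ : ℤ → A := fun j => c (j, false) with hc0
    set ε := (g (fun s : {i : ℤ // i ∈ S} => c₀ s.1)).2 with hε
    set c' : ℤ → A := fun j =>
      if hS : j ∈ S then g.symm (c (0, true), ε) ⟨j, hS⟩ else c₀ j with hc'
    have hgc' : (fun s : {i : ℤ // i ∈ S} => c' s.1) = g.symm (c (0, true), ε) := by
      funext s
      simp [hc', s.2]
    have hGc' : ∀ j : ℤ, G c' j = if j = 0 then c (0, true) else G c₀ j := by
      intro j
      by_cases hj : j = 0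
      · subst hj
        rw [if_pos rfl, (hgh c').1, hgc']
        simp
      · rw [if_neg hj, (hgh c').2 j hj, (hgh c₀).2 j hj]
        have hout : (fun s : {i : ℤ // i ∉ S} => c' s.1)
            = fun s : {i : ℤ // i ∉ S} => c₀ s.1 := by
          funext s
          simp [hc', s.2]
        rw [hout, hgc', Equiv.apply_symm_apply]
    have he : (fun j => SwapAt 0 (GId G c) (j, false)) = G c' := by
      funext j
      rw [hGc' j]
      by_cases hj : j = 0 <;> simp [SwapAt, GId, hj, hc0]
    show GId G.symm (SwapAt 0 (GId G c)) p = _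
    rcases p with ⟨j, b⟩
    cases b
    · have : GId G.symm (SwapAt 0 (GId G c)) (j, false)
          = G.symm (fun j' => SwapAt 0 (GId G c) (j', false)) j := by
        simp [GId]
      rw [this, he, Equiv.symm_apply_apply]
      simp [hc', hc0]
    · have : GId G.symm (SwapAt 0 (GId G c)) (j, true)
          = SwapAt 0 (GId G c) (j, true) := by simp [GId]
      rw [this]
      by_cases hj : j = 0
      · subst hj
        simp [SwapAt, GId, (hgh (fun j => c (j, false))).1]
      · simp [SwapAt, GId, hj]
  constructor
  · intro c x hx
    rcases x with ⟨j, b⟩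
    cases b
    · have hj : j ∉ S := by
        intro hj
        exact hx (Or.inl ⟨hj, rfl⟩)
      rw [key]
      simp [hj]
    · have hj : j ≠ 0 := by
        intro hj
        subst hj
        exact hx (Or.inr rfl)
      rw [key]
      simp [hj]
  · intro c d hcd x hx
    have hS0 : ∀ s : {i : ℤ // i ∈ S}, c (s.1, false) = d (s.1, false) := by
      intro s
      exact hcd (s.1, false) (Or.inl ⟨s.2, rfl⟩)
    have hfun : (fun s : {i : ℤ // i ∈ S} => c (s.1, false))
        = fun s : {i : ℤ // i ∈ S} => d (s.1, false) := funext hS0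
    have h0t : c (0, true) = d (0, true) := hcd (0, true) (Or.inr rfl)
    rcases x with ⟨j, b⟩
    cases b
    · have hj : j ∈ S := by
        rcases hx with hx | hx
        · exact hx.1
        · exact absurd hx (by simp)
      rw [key, key]
      simp [hj, hfun, h0t]
    · have hj : j = 0 := by
        rcases hx with hx | hx
        · exact absurd hx.2 (by simp)
        · exact congrArg Prod.fst hx
      subst hj
      rw [key, key]
      simp [hfun]
end

section
/- Let Σ be a finite nonempty type, G a bijection of the space of configurations ℤ → Σ, and S a finite set of integers such that the reversible update K₀ is localized upon the set (S × {false}) ∪ {(0, true)} of the index set ℤ × Bool. Then G is semilocalizable with respect to S. -/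
namespace SemilocAux

variable {A : Type u}

/-- Two-layer configuration with main layer `c` and constant aux layer `a`. -/
def D (c : ℤ → A) (a : A) : ℤ × Bool → A := fun p => if p.2 = true then a else c p.1

/-- The main-layer update: `T G c a = G⁻¹ ((G c)[0 ↦ a])`. -/
def T (G : (ℤ → A) ≃ (ℤ → A)) (c : ℤ → A) (a : A) : ℤ → A :=
  G.symm (Function.update (G c) 0 a)

lemma K_apply_false (G : (ℤ → A) ≃ (ℤ → A)) (c : ℤ → A) (a : A) (i : ℤ) :
    K G 0 (D c a) (i, false) = T G c a i := by
  show GId (⇑G.symm) (SwapAt 0 (GId (⇑G) (D c a))) (i, false) = _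
  simp only [GId, T]
  norm_num
  have : (fun j => SwapAt 0 (GId (⇑G) (D c a)) (j, false))
      = Function.update (G (fun j => D c a (j, false))) 0 (D c a (0, true)) := by
    funext j
    simp only [SwapAt, GId, D, Function.update_apply]
    by_cases h : j = 0 <;> simp [h]
  rw [this]
  simp [D]

lemma K_apply_true (G : (ℤ → A) ≃ (ℤ → A)) (c : ℤ → A) (a : A) :
    K G 0 (D c a) (0, true) = G c 0 := by
  show GId (⇑G.symm) (SwapAt 0 (GId (⇑G) (D c a))) (0, true) = _
  simp only [GId, SwapAt, D]
  norm_num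

variable (S : Finset ℤ) (G : (ℤ → A) ≃ (ℤ → A))
variable (hK : Localized (K G 0)
      (((↑S : Set ℤ) ×ˢ ({false} : Set Bool)) ∪ {((0 : ℤ), true)}))

lemma mem_false (i : ℤ) :
    ((i, false) ∈ (((↑S : Set ℤ) ×ˢ ({false} : Set Bool)) ∪ {((0 : ℤ), true)})) ↔ i ∈ S := by
  simp [Set.mem_prod, Prod.ext_iff]

lemma mem_true :
    (((0:ℤ), true) ∈ (((↑S : Set ℤ) ×ˢ ({false} : Set Bool)) ∪ {((0 : ℤ), true)})) := by
  simp

include hK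

lemma T_outside (c : ℤ → A) (a : A) {i : ℤ} (hi : i ∉ S) : T G c a i = c i := by
  have := hK.1 (D c a) (i, false) (by rw [mem_false]; exact hi)
  rwa [K_apply_false] at this

lemma T_on_S {c d : ℤ → A} (hcd : ∀ i ∈ S, c i = d i) (a : A) {i : ℤ} (hi : i ∈ S) :
    T G c a i = T G d a i := by
  have hag : ∀ x ∈ (((↑S : Set ℤ) ×ˢ ({false} : Set Bool)) ∪ {((0 : ℤ), true)}),
      D c a x = D d a x := by
    rintro ⟨j, b⟩ hx
    cases b
    · simp only [D]
      exact hcd j ((mem_false S j).1 hx)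
    · simp [D]
  have := hK.2 (D c a) (D d a) hag (i, false) ((mem_false S i).2 hi)
  rwa [K_apply_false, K_apply_false] at this

lemma G_zero_congr {c d : ℤ → A} (hcd : ∀ i ∈ S, c i = d i) [Nonempty A] :
    G c 0 = G d 0 := by
  have a : A := Classical.arbitrary A
  have hag : ∀ x ∈ (((↑S : Set ℤ) ×ˢ ({false} : Set Bool)) ∪ {((0 : ℤ), true)}),
      D c a x = D d a x := by
    rintro ⟨j, b⟩ hx
    cases b
    · simp only [D]
      exact hcd j ((mem_false S j).1 hx)
    · simp [D]
  have := hK.2 (D c a) (D d a) hag (0, true) (mem_true S)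
  rwa [K_apply_true, K_apply_true] at this

omit hK

lemma G_T (c : ℤ → A) (a : A) : G (T G c a) = Function.update (G c) 0 a :=
  G.apply_symm_apply _

lemma T_self (c : ℤ → A) : T G c (G c 0) = c := by
  simp [T, Function.update_eq_self]

lemma T_T (c : ℤ → A) (a b : A) : T G (T G c a) b = T G c b := by
  simp [T, G_T, Function.update_idem]

variable [Nonempty A]

/-- Combine values on `S` and off `S` into a full configuration. -/
def comb (u : { i : ℤ // i ∈ S } → A) (r : { i : ℤ // i ∉ S } → A) : ℤ → A :=
  fun i => if h : i ∈ S then u ⟨i, h⟩ else r ⟨i, h⟩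

/-- Canonical extension of `u : S → A`. -/
noncomputable def ext (u : { i : ℤ // i ∈ S } → A) : ℤ → A :=
  comb S u (fun _ => Classical.arbitrary A)

lemma ext_on_S (u : { i : ℤ // i ∈ S } → A) {i : ℤ} (hi : i ∈ S) : ext S u i = u ⟨i, hi⟩ := by
  simp [ext, comb, hi]

noncomputable def g0 (u : { i : ℤ // i ∈ S } → A) : A := G (ext S u) 0

noncomputable def psi (u : { i : ℤ // i ∈ S } → A) (a : A) : { i : ℤ // i ∈ S } → A :=
  fun s => T G (ext S u) a s.1

include hK

/-- `G c 0` only depends on `c` on `S`. -/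
lemma g0_of {c : ℤ → A} {u : { i : ℤ // i ∈ S } → A}
    (hc : ∀ s : { i : ℤ // i ∈ S }, c s.1 = u s) : G c 0 = g0 S G u := by
  apply G_zero_congr S G hK
  intro i hi
  rw [ext_on_S S u hi]
  exact hc ⟨i, hi⟩

lemma psi_of {c : ℤ → A} {u : { i : ℤ // i ∈ S } → A}
    (hc : ∀ s : { i : ℤ // i ∈ S }, c s.1 = u s) (a : A) (s : { i : ℤ // i ∈ S }) :
    T G c a s.1 = psi S G u a s := by
  apply T_on_S S G hK _ a s.2
  intro i hi
  rw [ext_on_S S u hi]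
  exact hc ⟨i, hi⟩

lemma g0_psi (u : { i : ℤ // i ∈ S } → A) (a : A) : g0 S G (psi S G u a) = a := by
  have h1 : G (T G (ext S u) a) 0 = g0 S G (psi S G u a) :=
    g0_of S G hK (fun s => rfl)
  rw [G_T] at h1
  simpa using h1.symm

lemma psi_psi (u : { i : ℤ // i ∈ S } → A) (a b : A) :
    psi S G (psi S G u a) b = psi S G u b := by
  funext s
  have h1 : T G (T G (ext S u) a) b s.1 = psi S G (psi S G u a) b s :=
    psi_of S G hK (fun s => rfl) b s
  rw [T_T] at h1
  exact h1.symm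

set_option linter.unusedSectionVars false in
lemma psi_g0 (u : { i : ℤ // i ∈ S } → A) : psi S G u (g0 S G u) = u := by
  funext s
  show T G (ext S u) (G (ext S u) 0) s.1 = u s
  rw [T_self, ext_on_S S u s.2]

/-- The equivalence relation whose quotient is the hidden type `E`. -/
def st : Setoid ({ i : ℤ // i ∈ S } → A) where
  r u v := psi S G u (g0 S G v) = v
  iseqv := by
    constructor
    · intro u; exact psi_g0 S G hK u
    · intro u v huv
      have := congrArg (fun w => psi S G w (g0 S G u)) huv
      simpa [psi_psi S G hK, psi_g0 S G hK] using this.symm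
    · intro u v w huv hvw
      rw [← huv] at hvw
      rwa [psi_psi S G hK] at hvw

/-- Representative independence for `G` off `0`. -/
lemma rep_indep {u v : { i : ℤ // i ∈ S } → A} (huv : psi S G u (g0 S G v) = v)
    (r : { i : ℤ // i ∉ S } → A) {j : ℤ} (hj : j ≠ 0) :
    G (comb S u r) j = G (comb S v r) j := by
  set c := comb S u r with hc
  have hcu : ∀ s : { i : ℤ // i ∈ S }, c s.1 = u s := by
    intro s; simp [hc, comb, s.2]
  have hT : T G c (g0 S G v) = comb S v r := by
    funext i
    by_cases hi : i ∈ S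
    · rw [psi_of S G hK hcu (g0 S G v) ⟨i, hi⟩, huv]
      simp [comb, hi]
    · rw [T_outside S G hK c _ hi]
      simp [hc, comb, hi]
  rw [← hT, G_T, Function.update_apply, if_neg hj]

end SemilocAux

open SemilocAux in
theorem semilocalizable_of_K_zero_localized {A : Type u} [Fintype A] [Nonempty A]
    (G : (ℤ → A) ≃ (ℤ → A)) (S : Finset ℤ)
    (hK : Localized (K G 0)
      (((↑S : Set ℤ) ×ˢ ({false} : Set Bool)) ∪ {((0 : ℤ), true)})) :
    Semilocalizable G S := by
  classical
  set σ := st S G hK with hσ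
  refine ⟨Quotient σ, ?_, ?_, ?_⟩
  · -- g : (S → A) ≃ A × E
    exact {
      toFun := fun u => (g0 S G u, Quotient.mk σ u)
      invFun := fun p => psi S G p.2.out p.1
      left_inv := by
        intro u
        have h := Quotient.mk_out (s := σ) u
        exact h
      right_inv := by
        rintro ⟨b, q⟩
        refine Prod.ext ?_ ?_
        · exact g0_psi S G hK q.out b
        · show Quotient.mk σ (psi S G q.out b) = q
          refine (Quotient.sound ?_).trans q.out_eq
          show psi S G (psi S G q.out b) (g0 S G q.out) = q.out
          rw [psi_psi S G hK, psi_g0 S G hK] }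
  · -- h : E × (Sᶜ → A) ≃ ({ j ≠ 0 } → A)
    refine {
      toFun := fun p => fun j => G (comb S p.1.out p.2) j.1
      invFun := fun w =>
        (Quotient.mk σ (fun s => G.symm (fun j => if h : j = 0 then Classical.arbitrary A
            else w ⟨j, h⟩) s.1),
         fun s => G.symm (fun j => if h : j = 0 then Classical.arbitrary A else w ⟨j, h⟩) s.1)
      left_inv := ?_
      right_inv := ?_ }
    · rintro ⟨q, r⟩
      set c := comb S q.out r with hc
      have hw : (fun j => if h : j = 0 then Classical.arbitrary A
          else G c (⟨j, h⟩ : { i : ℤ // i ≠ 0 }).1) = Function.update (G c) 0 (Classical.arbitrary A) := by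
        funext j
        by_cases h : j = 0 <;> simp [h, Function.update_apply]
      have hc' : (G.symm (fun j => if h : j = 0 then Classical.arbitrary A
          else G c (⟨j, h⟩ : { i : ℤ // i ≠ 0 }).1)) = T G c (Classical.arbitrary A) := by
        rw [hw]; rfl
      have hcu : ∀ s : { i : ℤ // i ∈ S }, c s.1 = q.out s := by
        intro s; simp [hc, comb, s.2]
      refine Prod.ext ?_ ?_
      · show Quotient.mk σ _ = q
        have heq : (fun s : { i : ℤ // i ∈ S } => G.symm (fun j => if h : j = 0 then Classical.arbitrary A
            else G c (⟨j, h⟩ : { i : ℤ // i ≠ 0 }).1) s.1) = psi S G q.out (Classical.arbitrary A) := by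
          funext s
          rw [hc']
          exact psi_of S G hK hcu _ s
        rw [heq]
        refine (Quotient.sound ?_).trans q.out_eq
        show psi S G (psi S G q.out _) (g0 S G q.out) = q.out
        rw [psi_psi S G hK, psi_g0 S G hK]
      · show (fun s : { i : ℤ // i ∉ S } => _) = r
        funext s
        show G.symm (fun j => if h : j = 0 then Classical.arbitrary A
            else G c (⟨j, h⟩ : { i : ℤ // i ≠ 0 }).1) s.1 = r s
        rw [hc', T_outside S G hK c _ s.2]
        simp [hc, comb, s.2]
    · intro w
      set c := G.symm (fun j => if h : j = 0 then Classical.arbitrary A else w ⟨j, h⟩) with hcdef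
      funext j
      show G (comb S (Quotient.mk σ (fun s => c s.1)).out (fun s => c s.1)) j.1 = w j
      have hout : psi S G (Quotient.mk σ (fun s => c s.1)).out
          (g0 S G (fun s => c s.1)) = (fun s => c s.1) :=
        Quotient.mk_out (s := σ) _
      rw [rep_indep S G hK hout _ j.2]
      have hcc : comb S (fun s : { i : ℤ // i ∈ S } => c s.1) (fun s : { i : ℤ // i ∉ S } => c s.1) = c := by
        funext i
        by_cases h : i ∈ S <;> simp [comb, h]
      rw [hcc, hcdef]
      rw [G.apply_symm_apply]
      simp [j.2]
  · intro c
    constructor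
    · exact g0_of S G hK (fun s => rfl)
    · intro j hj
      show G c j = G (comb S (Quotient.mk σ (fun s => c s.1)).out (fun s => c s.1)) j
      have hout : psi S G (Quotient.mk σ (fun s => c s.1)).out
          (g0 S G (fun s => c s.1)) = (fun s => c s.1) :=
        Quotient.mk_out (s := σ) _
      rw [rep_indep S G hK hout _ hj]
      have : comb S (fun s : { i : ℤ // i ∈ S } => c s.1) (fun s : { i : ℤ // i ∉ S } => c s.1) = c := by
        funext i
        by_cases h : i ∈ S <;> simp [comb, h]
      rw [this]
end

section
/- Let Σ be a type and F a bijection of the space of configurations ℤ → Σ such that there exist finite sets N, N' ⊆ ℤ with: for all configurations c, d and every i : ℤ, if c and d agree on the translate i + N then F(c)(i) = F(d)(i); and if c and d agree on i + N' then F⁻¹(c)(i) = F⁻¹(d)(i). Let B be a map on configurations that is localized upon a finite set S ⊆ ℤ. Then there exists a finite set T ⊆ ℤ such that F ∘ B ∘ F⁻¹ is localized upon T. -/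
theorem conj_localized {A : Type*} (F : (ℤ → A) ≃ (ℤ → A)) (N N' : Finset ℤ)
    (hF : ∀ (c d : ℤ → A) (i : ℤ),
      (∀ n ∈ N, c (i + n) = d (i + n)) → F c i = F d i)
    (hFinv : ∀ (c d : ℤ → A) (i : ℤ),
      (∀ n ∈ N', c (i + n) = d (i + n)) → F.symm c i = F.symm d i)
    (B : (ℤ → A) → (ℤ → A)) (S : Finset ℤ) (hB : Localized B (↑S : Set ℤ)) :
    ∃ T : Finset ℤ, Localized (⇑F ∘ B ∘ ⇑F.symm) (↑T : Set ℤ) := by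
  classical
  set T₀ : Finset ℤ := (S ×ˢ N).image (fun p => p.1 - p.2) with hT₀
  set T : Finset ℤ :=
    T₀ ∪ (T₀ ×ˢ (N ×ˢ N')).image (fun p => p.1 + p.2.1 + p.2.2)
      ∪ (S ×ˢ N').image (fun p => p.1 + p.2) with hT
  have hmem₀ : ∀ i : ℤ, ∀ n ∈ N, i + n ∈ S → i ∈ T₀ := by
    intro i n hn hs
    simp only [hT₀, Finset.mem_image, Finset.mem_product]
    exact ⟨⟨i + n, n⟩, ⟨hs, hn⟩, by ring⟩
  have hT₀T : ∀ i ∈ T₀, i ∈ T := fun i hi => by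
    simp [hT, hi]
  have hmem₁ : ∀ i ∈ T₀, ∀ n ∈ N, ∀ n' ∈ N', i + n + n' ∈ T := by
    intro i hi n hn n' hn'
    simp only [hT, Finset.mem_union, Finset.mem_image, Finset.mem_product]
    exact Or.inl (Or.inr ⟨⟨i, n, n'⟩, ⟨hi, hn, hn'⟩, rfl⟩)
  have hmem₂ : ∀ s ∈ S, ∀ n' ∈ N', s + n' ∈ T := by
    intro s hs n' hn'
    simp only [hT, Finset.mem_union, Finset.mem_image, Finset.mem_product]
    exact Or.inr ⟨⟨s, n'⟩, ⟨hs, hn'⟩, rfl⟩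
  -- key: identity outside T₀
  have hid : ∀ (c : ℤ → A) (i : ℤ), i ∉ T₀ → (⇑F ∘ B ∘ ⇑F.symm) c i = c i := by
    intro c i hi
    have h1 : F (B (F.symm c)) i = F (F.symm c) i := by
      apply hF
      intro n hn
      apply hB.1
      intro hs
      exact hi (hmem₀ i n hn hs)
    simpa [Function.comp] using h1.trans (by rw [F.apply_symm_apply])
  refine ⟨T, ?_, ?_⟩
  · intro c i hi
    exact hid c i (fun h => hi (by exact_mod_cast hT₀T i h))
  · intro c d hcd i hiT
    by_cases hi : i ∈ T₀
    · show F (B (F.symm c)) i = F (B (F.symm d)) i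
      apply hF
      intro n hn
      by_cases hs : i + n ∈ S
      · apply hB.2
        intro s hsS
        apply hFinv
        intro n' hn'
        exact hcd _ (by exact_mod_cast hmem₂ s hsS n' hn')
        exact_mod_cast hs
      · rw [hB.1 _ _ (by exact_mod_cast hs), hB.1 _ _ (by exact_mod_cast hs)]
        apply hFinv
        intro n' hn'
        exact hcd _ (by exact_mod_cast hmem₁ i hi n hn n' hn')
    · rw [hid c i hi, hid d i hi]
      exact hcd i hiT
end

section
/- Let Σ be a type, G a bijection of the space of configurations ℤ → Σ that is semilocalizable with respect to a finite set S ⊆ ℤ, and h : Σ → Σ a bijection. Let H₀ be the map on configurations applying h at cell 0 and leaving all other cells unchanged: H₀(c)(0) = h(c(0)) and H₀(c)(j) = c(j) for j ≠ 0. Then G⁻¹ ∘ H₀ ∘ G is localized upon S. -/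
/-- The map applying the bijection `h` at cell `0` only. -/
def ApplyAtZero {A : Type u} (h : A ≃ A) (c : ℤ → A) : ℤ → A :=
  Function.update c 0 (h (c 0))

theorem conj_applyAtZero_localized {A : Type u} (G : (ℤ → A) ≃ (ℤ → A))
    (S : Finset ℤ) (hG : Semilocalizable G S) (h : A ≃ A) :
    Localized (⇑G.symm ∘ ApplyAtZero h ∘ ⇑G) (↑S : Set ℤ) := by
  obtain ⟨E, g, ht, hspec⟩ := hG
  set F := fun (c : ℤ → A) (i : ℤ) =>
    if hi : i ∈ S then
      (g.symm (h (g (fun s : {i : ℤ // i ∈ S} => c s.1)).1,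
        (g (fun s : {i : ℤ // i ∈ S} => c s.1)).2)) ⟨i, hi⟩
    else c i with hF
  have key : ∀ c, G.symm (ApplyAtZero h (G c)) = F c := by
    intro c
    have hres : (fun s : {i : ℤ // i ∈ S} => F c s.1)
        = g.symm (h (g (fun s : {i : ℤ // i ∈ S} => c s.1)).1,
          (g (fun s : {i : ℤ // i ∈ S} => c s.1)).2) := by
      funext s
      simp only [hF, dif_pos s.2]
    have hout : (fun s : {i : ℤ // i ∉ S} => F c s.1)
        = fun s : {i : ℤ // i ∉ S} => c s.1 := by
      funext s
      simp only [hF, dif_neg s.2]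
    have hGF : G (F c) = ApplyAtZero h (G c) := by
      funext j
      by_cases hj : j = 0
      · subst hj
        rw [(hspec (F c)).1, hres]
        simp [ApplyAtZero, (hspec c).1]
      · rw [(hspec (F c)).2 j hj, hres, hout]
        simp [ApplyAtZero, Function.update_of_ne hj, (hspec c).2 j hj]
    rw [← hGF, Equiv.symm_apply_apply]
  constructor
  · intro c x hx
    simp only [Function.comp_apply, key c, hF, dif_neg (by simp at hx; exact hx)]
  · intro c d hcd x hx
    have hrestr : (fun s : {i : ℤ // i ∈ S} => c s.1)
        = fun s : {i : ℤ // i ∈ S} => d s.1 := by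
      funext s; exact hcd s.1 (by simpa using s.2)
    simp only [Function.comp_apply, key c, key d, hF,
      dif_pos (show x ∈ S by simpa using hx), hrestr]
end

section
/- Let Σ be a type and G a bijection of the space of configurations ℤ → Σ that commutes with the shift σ (where σ(c)(i) = c(i+1)), and suppose the reversible update K₀ is localized upon (S × {false}) ∪ {(0, true)} for a finite set S ⊆ ℤ. Then for every i : ℤ, the reversible update K_i is localized upon ((i + S) × {false}) ∪ {(i, true)}, where i + S = {i + s : s ∈ S}. -/
/-- The shift on configurations: `σ c i = c (i + 1)`. -/
def shift {A : Type*} (c : ℤ → A) : ℤ → A := fun i => c (i + 1)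

/-- A map commuting with the shift commutes with all its integer powers. -/
lemma key_shift {A : Type*} (G : (ℤ → A) → (ℤ → A))
    (h1 : ∀ c : ℤ → A, G (fun j => c (j + 1)) = fun i => G c (i + 1)) :
    ∀ (n : ℤ) (c : ℤ → A), G (fun j => c (j + n)) = fun i => G c (i + n) := by
  have h1' : ∀ c : ℤ → A, G (fun j => c (j - 1)) = fun i => G c (i - 1) := by
    intro c
    have h := h1 (fun j => c (j - 1))
    have hc : (fun j => c (j + 1 - 1)) = c := by funext j; norm_num
    simp only [hc] at h
    funext i
    have := congrFun h (i - 1)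
    simp only [sub_add_cancel] at this
    rw [this]
  intro n
  induction n using Int.induction_on with
  | zero => intro c; simp
  | succ k ih =>
    intro c
    have e1 : (fun j => c (j + ((k : ℤ) + 1))) = fun j => (fun m => c (m + 1)) (j + k) := by
      funext j; ring_nf
    rw [e1, ih (fun m => c (m + 1)), h1 c]
    funext i; ring_nf
  | pred k ih =>
    intro c
    have e1 : (fun j => c (j + (-(k : ℤ) - 1))) = fun j => (fun m => c (m - 1)) (j + (-k)) := by
      funext j; ring_nf
    rw [e1, ih (fun m => c (m - 1)), h1' c]
    funext i; ring_nf

lemma GId_comm {A : Type*} (G : (ℤ → A) → (ℤ → A))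
    (key : ∀ (n : ℤ) (c : ℤ → A), G (fun j => c (j + n)) = fun i => G c (i + n))
    (i : ℤ) (c : ℤ × Bool → A) :
    GId G (fun p => c (p.1 + i, p.2)) = fun p => GId G c (p.1 + i, p.2) := by
  funext p
  obtain ⟨a, b⟩ := p
  cases b with
  | true => simp [GId]
  | false =>
    simp only [GId, if_neg (by simp : ¬ (false = true))]
    exact congrFun (key i (fun j => c (j, false))) a

lemma SwapAt_comm_s14 {A : Type*} (n i : ℤ) (c : ℤ × Bool → A) :
    SwapAt n (fun p => c (p.1 + i, p.2)) = fun p => SwapAt (n + i) c (p.1 + i, p.2) := by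
  funext p
  simp only [SwapAt]
  by_cases h : p.1 = n
  · rw [if_pos h, if_pos (by omega)]
  · rw [if_neg h, if_neg (by omega)]

theorem K_i_localized_of_K_zero_localized {A : Type*} (G : (ℤ → A) ≃ (ℤ → A))
    (hshift : ⇑G ∘ shift = shift ∘ ⇑G) (S : Finset ℤ)
    (hK : Localized (K G 0)
      (((↑S : Set ℤ) ×ˢ ({false} : Set Bool)) ∪ {((0 : ℤ), true)})) :
    ∀ i : ℤ, Localized (K G i)
      ((((fun s => i + s) '' (↑S : Set ℤ)) ×ˢ ({false} : Set Bool))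
        ∪ {(i, true)}) := by
  have h1 : ∀ c : ℤ → A, G (fun j => c (j + 1)) = fun i => G c (i + 1) := by
    intro c
    exact congrFun hshift c
  have h1' : ∀ c : ℤ → A, G.symm (fun j => c (j + 1)) = fun i => G.symm c (i + 1) := by
    intro c
    apply G.injective
    rw [G.apply_symm_apply]
    have h := h1 (G.symm c)
    rw [h, G.apply_symm_apply]
  have key := key_shift (⇑G) h1
  have key' := key_shift (⇑G.symm) h1'
  intro i
  set Y₀ : Set (ℤ × Bool) := ((↑S : Set ℤ) ×ˢ ({false} : Set Bool)) ∪ {((0 : ℤ), true)}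
  set Yi : Set (ℤ × Bool) :=
    (((fun s => i + s) '' (↑S : Set ℤ)) ×ˢ ({false} : Set Bool)) ∪ {(i, true)}
  -- conjugation identity
  have main : ∀ (c : ℤ × Bool → A) (x : ℤ × Bool),
      K G 0 (fun p => c (p.1 + i, p.2)) x = K G i c (x.1 + i, x.2) := by
    intro c x
    have e : K G 0 (fun p => c (p.1 + i, p.2)) = fun x => K G i c (x.1 + i, x.2) := by
      show GId G.symm (SwapAt 0 (GId G (fun p => c (p.1 + i, p.2)))) = _
      rw [GId_comm (⇑G) key i c, SwapAt_comm_s14 0 i (GId (⇑G) c), zero_add,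
        GId_comm (⇑G.symm) key' i (SwapAt i (GId (⇑G) c))]
      rfl
    exact congrFun e x
  -- membership correspondence
  have hmem : ∀ y : ℤ × Bool, y ∈ Yi ↔ (y.1 - i, y.2) ∈ Y₀ := by
    rintro ⟨a, b⟩
    simp only [Yi, Y₀, Set.mem_union, Set.mem_prod, Set.mem_image, Set.mem_singleton_iff,
      Prod.mk.injEq, Finset.mem_coe]
    constructor
    · rintro (⟨⟨s, hs, rfl⟩, hb⟩ | ⟨rfl, rfl⟩)
      · left; exact ⟨by simpa using hs, hb⟩
      · right; exact ⟨by ring, rfl⟩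
    · rintro (⟨hs, hb⟩ | ⟨h0, rfl⟩)
      · left; exact ⟨⟨a - i, hs, by ring⟩, hb⟩
      · right; exact ⟨by omega, rfl⟩
  obtain ⟨hK1, hK2⟩ := hK
  constructor
  · intro c y hy
    have hy' : (y.1 - i, y.2) ∉ Y₀ := fun h => hy ((hmem y).mpr h)
    have := hK1 (fun p => c (p.1 + i, p.2)) (y.1 - i, y.2) hy'
    have e : K G i c (y.1 - i + i, y.2) = c (y.1 - i + i, y.2) := by
      rw [← main c (y.1 - i, y.2)]; exact this
    simpa using e
  · intro c d hcd y hy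
    have hy' : (y.1 - i, y.2) ∈ Y₀ := (hmem y).mp hy
    have hagree : ∀ x ∈ Y₀, (fun p => c (p.1 + i, p.2)) x = (fun p => d (p.1 + i, p.2)) x := by
      intro x hx
      apply hcd
      rw [hmem (x.1 + i, x.2)]
      simpa using hx
    have := hK2 _ _ hagree (y.1 - i, y.2) hy'
    rw [main c (y.1 - i, y.2), main d (y.1 - i, y.2)] at this
    simpa using this
end

section
/- Let Σ be a type, h : Σ → Σ an involution (h ∘ h = id), and H the map on configurations ℤ → Σ applying h at every cell: H(c)(i) = h(c(i)). Let G be a bijection of the configuration space that commutes with the shift σ (where σ(c)(i) = c(i+1)) and satisfies G⁻¹ = H ∘ G ∘ H, and suppose there is a finite set N' ⊆ ℤ such that for all configurations c, d and every i, if c and d agree on i + N' then G⁻¹(c)(i) = G⁻¹(d)(i). For i : ℤ let H_i be the map applying h at cell i only, and let L_i := G⁻¹ ∘ H_i ∘ G. Then for every configuration c, every j : ℤ, and every finite set F ⊆ ℤ containing j + N', the composition of the L_i over i ∈ F (in any order) satisfies h((∏_{i∈F} L_i)(c)(j)) = G(G(c))(j). -/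
/-- The map applying `h` at every cell. -/
def ApplyAll {A : Type*} (h : A → A) (c : ℤ → A) : ℤ → A := fun i => h (c i)

/-- The map applying `h` at cell `i` only, leaving other cells unchanged. -/
def ApplyAt {A : Type*} (h : A → A) (i : ℤ) (c : ℤ → A) : ℤ → A :=
  Function.update c i (h (c i))

/-- The local block `L_i := G⁻¹ ∘ H_i ∘ G` of the exact block representation
of the square of a locally time-symmetric CA. -/
def L {A : Type*} (G : (ℤ → A) ≃ (ℤ → A)) (h : A → A) (i : ℤ) :
    (ℤ → A) → (ℤ → A) :=
  ⇑G.symm ∘ ApplyAt h i ∘ ⇑G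

theorem EBR_of_square_of_LTSCA {A : Type*} (h : A → A) (hinv : h ∘ h = id)
    (G : (ℤ → A) ≃ (ℤ → A)) (hshift : ⇑G ∘ shift = shift ∘ ⇑G)
    (hsym : ⇑G.symm = ApplyAll h ∘ ⇑G ∘ ApplyAll h)
    (N' : Finset ℤ)
    (hN' : ∀ (c d : ℤ → A) (i : ℤ),
      (∀ n ∈ N', c (i + n) = d (i + n)) → G.symm c i = G.symm d i) :
    ∀ (c : ℤ → A) (j : ℤ) (F : Finset ℤ), (∀ n ∈ N', j + n ∈ F) →
      ∀ l : List ℤ, l.Nodup → l.toFinset = F →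
        h ((l.map (L G h)).foldr (· ∘ ·) id c j) = G (G c) j := by
  intro c j F hF l hnd hlF
  have hh : ∀ x, h (h x) = x := fun x => congrFun hinv x
  -- Step 1: the composition of the L_i equals G⁻¹ ∘ (composition of H_i) ∘ G.
  have step1 : ∀ (l : List ℤ) (x : ℤ → A),
      (l.map (L G h)).foldr (· ∘ ·) id x
        = G.symm ((l.map (ApplyAt h)).foldr (· ∘ ·) id (G x)) := by
    intro l
    induction l with
    | nil => intro x; simp
    | cons a t ih =>
      intro x
      simp only [List.map_cons, List.foldr_cons, Function.comp_apply]
      rw [ih x]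
      simp [L, Function.comp]
  -- Step 2: composition of H_i over a nodup list flips exactly cells in the list.
  have step2 : ∀ (l : List ℤ), l.Nodup → ∀ (x : ℤ → A) (i : ℤ),
      (l.map (ApplyAt h)).foldr (· ∘ ·) id x i
        = if i ∈ l then h (x i) else x i := by
    intro l
    induction l with
    | nil => intro _ x i; simp
    | cons a t ih =>
      intro hnd x i
      have hat : a ∉ t := (List.nodup_cons.mp hnd).1
      have hndt : t.Nodup := (List.nodup_cons.mp hnd).2
      simp only [List.map_cons, List.foldr_cons, Function.comp_apply]
      rcases eq_or_ne i a with rfl | hne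
      · rw [ApplyAt, Function.update_self, ih hndt x i, if_neg hat]
        simp
      · rw [ApplyAt, Function.update_of_ne hne, ih hndt x i]
        by_cases hit : i ∈ t
        · rw [if_pos hit, if_pos (List.mem_cons_of_mem a hit)]
        · rw [if_neg hit, if_neg (by simp [hne, hit])]
  rw [step1 l c]
  -- Step 3: locality.
  have key : G.symm ((l.map (ApplyAt h)).foldr (· ∘ ·) id (G c)) j
      = G.symm (ApplyAll h (G c)) j := by
    apply hN'
    intro n hn
    have hmem : j + n ∈ l := by
      rw [← List.mem_toFinset, hlF]; exact hF n hn
    rw [step2 l hnd (G c) (j + n), if_pos hmem]; rfl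
  rw [key]
  have hGG : G.symm (ApplyAll h (G c)) = ApplyAll h (G (G c)) := by
    rw [hsym]
    simp only [Function.comp_apply]
    have hcc : ApplyAll h (ApplyAll h (G c)) = G c := by
      funext i; exact hh _
    rw [hcc]
  rw [hGG]
  exact hh _
end
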